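/- Let E : Fin N × Fin D → Fin M be a (K, ε)-extractor with K an integer, 0 < K ≤ N, and let S be a set of left vertices with #S ≤ K. Then the number of right vertices that are bad for S is less than ε·M. -/
import Mathlib


open Finset

/-- `edgeCount E S Y` is the number of edges between `S` and `Y` in the
bipartite multigraph given by `E : Fin N × Fin D → Fin M`. -/
def edgeCount {N D M : ℕ} (E : Fin N × Fin D → Fin M)
    (S : Finset (Fin N)) (Y : Finset (Fin M)) : ℕ :=
  ((S ×ˢ (univ : Finset (Fin D))).filter (fun p => E p ∈ Y)).card

/-- `E` is a `(K, ε)`-extractor: for every set `S` of at least `K` left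
vertices and every set `Y` of right vertices,
`|#E(S,Y)/(D·#S) − #Y/M| < ε`. -/
def IsExtractor {N D M : ℕ} (E : Fin N × Fin D → Fin M) (K : ℕ) (ε : ℝ) : Prop :=
  ∀ (S : Finset (Fin N)) (Y : Finset (Fin M)), K ≤ S.card →
    |(edgeCount E S Y : ℝ) / (D * S.card) - (Y.card : ℝ) / M| < ε

/-- A right vertex `z` is bad for `S` if it has more than `2DK/M` neighbors
in `S` (counted with multiplicity). -/
def BadFor {N D M : ℕ} (E : Fin N × Fin D → Fin M) (K : ℕ)
    (S : Finset (Fin N)) (z : Fin M) : Prop :=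
  (2 * D * K : ℝ) / M <
    (((S ×ˢ (univ : Finset (Fin D))).filter (fun p => E p = z)).card : ℝ)

lemma edgeCount_eq_sum {N D M : ℕ} (E : Fin N × Fin D → Fin M)
    (S : Finset (Fin N)) (Y : Finset (Fin M)) :
    edgeCount E S Y =
      ∑ z ∈ Y, ((S ×ˢ (univ : Finset (Fin D))).filter (fun p => E p = z)).card := by
  classical
  unfold edgeCount
  rw [Finset.card_filter]
  simp only [Finset.card_filter]
  rw [Finset.sum_comm]
  refine Finset.sum_congr rfl fun p _ => ?_
  rw [Finset.sum_ite_eq Y (E p) (fun _ => 1)]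

/-- For a `(K, ε)`-extractor and a set `S` of at most `K` left vertices, the
number of right vertices that are bad for `S` is less than `ε·M`. -/
theorem card_bad_lt {N D M : ℕ} (E : Fin N × Fin D → Fin M)
    (K : ℕ) (ε : ℝ) (hK : 0 < K) (hKN : K ≤ N) (hD : 0 < D) (hM : 0 < M)
    (hext : IsExtractor E K ε)
    (S : Finset (Fin N)) (hS : S.card ≤ K) :
    (({z : Fin M | BadFor E K S z}.ncard : ℝ)) < ε * M := by
  classical
  set Y : Finset (Fin M) := univ.filter (fun z => BadFor E K S z) with hYdef
  have hset : {z : Fin M | BadFor E K S z} = ↑Y := by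
    ext z; simp [hYdef]
  rw [hset, Set.ncard_coe_finset]
  obtain ⟨T, hST, _, hT⟩ := Finset.exists_subsuperset_card_eq (S.subset_univ) hS
    (by simpa using hKN)
  have hKT : K ≤ T.card := hT.ge
  have hM0 : (0 : ℝ) < M := by exact_mod_cast hM
  have hDK : (0 : ℝ) < (D : ℝ) * K := by positivity
  have hε : 0 < ε := lt_of_le_of_lt (abs_nonneg _) (hext T ∅ hKT)
  rcases Y.eq_empty_or_nonempty with hY | hY
  · rw [hY]; simpa using mul_pos hε hM0
  · -- key1 : lots of edges from T to Y
    have hmono : ∀ z, ((S ×ˢ (univ : Finset (Fin D))).filter (fun p => E p = z)).card ≤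
        ((T ×ˢ (univ : Finset (Fin D))).filter (fun p => E p = z)).card := fun z =>
      Finset.card_le_card (Finset.filter_subset_filter _
        (Finset.product_subset_product_left hST))
    have key1 : (Y.card : ℝ) * ((2 * D * K : ℝ) / M) < (edgeCount E T Y : ℝ) := by
      rw [edgeCount_eq_sum]
      push_cast
      calc (Y.card : ℝ) * ((2 * D * K : ℝ) / M) = ∑ _z ∈ Y, (2 * D * K : ℝ) / M := by
            rw [Finset.sum_const, nsmul_eq_mul]
        _ < ∑ z ∈ Y, (((T ×ˢ (univ : Finset (Fin D))).filter (fun p => E p = z)).card : ℝ) := by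
            refine Finset.sum_lt_sum_of_nonempty hY fun z hz => ?_
            have hb : BadFor E K S z := by
              simpa [hYdef] using hz
            exact lt_of_lt_of_le hb (by exact_mod_cast hmono z)
    have key2 := hext T Y hKT
    rw [hT] at key2
    have h2 : (edgeCount E T Y : ℝ) / ((D : ℝ) * K) - (Y.card : ℝ) / M < ε :=
      lt_of_le_of_lt (le_abs_self _) key2
    have h2' : (edgeCount E T Y : ℝ) < (ε + (Y.card : ℝ) / M) * ((D : ℝ) * K) := by
      rw [← div_lt_iff₀ hDK] at *
      linarith
    have hyM : (Y.card : ℝ) / M < ε := by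
      have h3 := key1.trans h2'
      have h4 : 2 * ((Y.card : ℝ) / M) * ((D : ℝ) * K) < (ε + (Y.card : ℝ) / M) * ((D : ℝ) * K) := by
        have : (Y.card : ℝ) * (2 * D * K / M) = 2 * ((Y.card : ℝ) / M) * ((D : ℝ) * K) := by
          ring
        linarith [this ▸ h3]
      have h5 : ((Y.card : ℝ) / M) * ((D : ℝ) * K) < ε * ((D : ℝ) * K) := by nlinarith
      exact lt_of_mul_lt_mul_right h5 hDK.le
    rwa [div_lt_iff₀ hM0] at hyM
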